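/- arXiv:2601.13611 — 2 statements merged into one kernel-verified Lean document; each statement's English description precedes it below -/
import Mathlib

section
/- Let $n_1, n_2, n_3 \in \mathbb{Z}^d$ be distinct and suppose for every permutation $(i,j,l)$ of $(1,2,3)$ one has $|n_i-n_j|^2 + |n_i-n_l|^2 - |n_j-n_l|^2 > 0$ (i.e., all angles between differences at a common vertex are strictly acute). Then there is no $k \in \mathbb{Z}^3$ with $k_1+k_2+k_3 = 1$, all $k_i \ne 0$, and $k_1 k_2 |n_1-n_2|^2 + k_2 k_3 |n_2-n_3|^2 + k_1 k_3 |n_1-n_3|^2 = 0$. -/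
open Finset

/-- Squared Euclidean norm of an integer vector. -/
def nsq {d : ℕ} (n : Fin d → ℤ) : ℤ := ∑ i, n i ^ 2

lemma knonpos (k : ℤ) : k * (1 - k) ≤ 0 := by
  rcases le_or_gt k 0 with h | h
  · nlinarith
  · nlinarith

lemma ktwo (k : ℤ) (h0 : k ≠ 0) (h1 : k ≠ 1) : k * (1 - k) ≤ -2 := by
  rcases le_or_gt k 0 with h | h
  · have : k ≤ -1 := by omega
    nlinarith
  · have : 2 ≤ k := by omega
    nlinarith

lemma key (a c p k1 k2 k3 : ℤ) (hp : 1 ≤ p) (hap : p < a) (hcp : p < c)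
    (hsum : k1 + k2 + k3 = 1) (h1 : k1 ≠ 0) (h2 : k2 ≠ 0) (h3 : k3 ≠ 0) :
    k1 * k2 * a + k2 * k3 * (a + c - 2 * p) + k1 * k3 * c < 0 := by
  have hk3 : k3 = 1 - k1 - k2 := by omega
  have hQ : k1 * k2 * a + k2 * k3 * (a + c - 2 * p) + k1 * k3 * c
      = p * (k1 * (1 - k1)) + (a - p) * (k2 * (1 - k2)) + (c - p) * (k3 * (1 - k3)) := by
    subst hk3; ring
  rw [hQ]
  by_cases e1 : k1 = 1
  · by_cases e2 : k2 = 1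
    · have e3 : k3 = -1 := by omega
      have hA3 := ktwo k3 h3 (by omega)
      have hA2 := knonpos k2
      have hA1 := knonpos k1
      nlinarith [mul_nonpos_of_nonneg_of_nonpos (by linarith : (0:ℤ) ≤ a - p) hA2,
        mul_nonpos_of_nonneg_of_nonpos (by linarith : (0:ℤ) ≤ p) hA1,
        mul_le_mul_of_nonneg_left hA3 (by linarith : (0:ℤ) ≤ c - p)]
    · have hA2 := ktwo k2 h2 e2
      have hA3 := knonpos k3
      have hA1 := knonpos k1
      nlinarith [mul_nonpos_of_nonneg_of_nonpos (by linarith : (0:ℤ) ≤ c - p) hA3,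
        mul_nonpos_of_nonneg_of_nonpos (by linarith : (0:ℤ) ≤ p) hA1,
        mul_le_mul_of_nonneg_left hA2 (by linarith : (0:ℤ) ≤ a - p)]
  · have hA1 := ktwo k1 h1 e1
    have hA2 := knonpos k2
    have hA3 := knonpos k3
    nlinarith [mul_nonpos_of_nonneg_of_nonpos (by linarith : (0:ℤ) ≤ a - p) hA2,
      mul_nonpos_of_nonneg_of_nonpos (by linarith : (0:ℤ) ≤ c - p) hA3,
      mul_le_mul_of_nonneg_left hA1 (by linarith : (0:ℤ) ≤ p)]

theorem stmt_6 (d : ℕ) (n₁ n₂ n₃ : Fin d → ℤ)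
    (h12 : n₁ ≠ n₂) (h13 : n₁ ≠ n₃) (h23 : n₂ ≠ n₃)
    (ha1 : 0 < nsq (n₁ - n₂) + nsq (n₁ - n₃) - nsq (n₂ - n₃))
    (ha2 : 0 < nsq (n₂ - n₁) + nsq (n₂ - n₃) - nsq (n₁ - n₃))
    (ha3 : 0 < nsq (n₃ - n₁) + nsq (n₃ - n₂) - nsq (n₁ - n₂)) :
    ¬ ∃ k₁ k₂ k₃ : ℤ, k₁ + k₂ + k₃ = 1 ∧ k₁ ≠ 0 ∧ k₂ ≠ 0 ∧ k₃ ≠ 0 ∧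
      k₁ * k₂ * nsq (n₁ - n₂) + k₂ * k₃ * nsq (n₂ - n₃) + k₁ * k₃ * nsq (n₁ - n₃) = 0 := by
  rintro ⟨k₁, k₂, k₃, hsum, h1, h2, h3, hQ⟩
  set P : ℤ := ∑ i, (n₁ i - n₂ i) * (n₁ i - n₃ i) with hP
  have hb : nsq (n₂ - n₃) = nsq (n₁ - n₂) + nsq (n₁ - n₃) - 2 * P := by
    simp only [nsq, Pi.sub_apply, hP, Finset.mul_sum, ← Finset.sum_add_distrib,
      ← Finset.sum_sub_distrib]
    exact Finset.sum_congr rfl fun i _ => by ring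
  have hsymm : ∀ x y : Fin d → ℤ, nsq (x - y) = nsq (y - x) := fun x y => by
    simp only [nsq, Pi.sub_apply]
    exact Finset.sum_congr rfl fun i _ => by ring
  rw [hsymm n₂ n₁] at ha2
  rw [hsymm n₃ n₁, hsymm n₃ n₂] at ha3
  rw [hb] at ha1 ha2 ha3 hQ
  have hp : 1 ≤ P := by omega
  have hap : P < nsq (n₁ - n₂) := by omega
  have hcp : P < nsq (n₁ - n₃) := by omega
  have := key (nsq (n₁ - n₂)) (nsq (n₁ - n₃)) P k₁ k₂ k₃ hp hap hcp hsum h1 h2 h3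
  omega
end

section
/- Let $a, b, c > 0$ be reals with $a + b - c > 0$ (acuteness), and let $k_1, k_3 \ge 1$, $k_2 \le -1$ be integers with $k_1 + k_2 + k_3 = 1$. Then $|k_1 k_2 \, a + k_2 k_3 \, b + k_1 k_3 \, c| \ge k_1 k_3 (a + b - c) > 0$. -/
theorem stmt_10 (a b c : ℝ) (ha : 0 < a) (hb : 0 < b) (hc : 0 < c)
    (hacute : 0 < a + b - c) (k₁ k₂ k₃ : ℤ) (h1 : 1 ≤ k₁) (h2 : k₂ ≤ -1) (h3 : 1 ≤ k₃)
    (hsum : k₁ + k₂ + k₃ = 1) :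
    |(k₁ * k₂ : ℝ) * a + (k₂ * k₃ : ℝ) * b + (k₁ * k₃ : ℝ) * c| ≥
      (k₁ * k₃ : ℝ) * (a + b - c) ∧ 0 < (k₁ * k₃ : ℝ) * (a + b - c) := by
  have h1' : (1:ℝ) ≤ (k₁:ℝ) := by exact_mod_cast h1
  have h3' : (1:ℝ) ≤ (k₃:ℝ) := by exact_mod_cast h3
  have hsum' : (k₁:ℝ) + k₂ + k₃ = 1 := by exact_mod_cast hsum
  have hA : (0:ℝ) ≤ (-(k₂:ℝ) - k₃) := by linarith
  have hB : (0:ℝ) ≤ (-(k₂:ℝ) - k₁) := by linarith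
  have hpos : 0 < (k₁ * k₃ : ℝ) * (a + b - c) := by
    push_cast
    have : (1:ℝ) ≤ (k₁:ℝ) * k₃ := by nlinarith
    nlinarith
  refine ⟨?_, hpos⟩
  have key : -((k₁ * k₂ : ℝ) * a + (k₂ * k₃ : ℝ) * b + (k₁ * k₃ : ℝ) * c) ≥
      (k₁ * k₃ : ℝ) * (a + b - c) := by
    push_cast
    nlinarith [mul_nonneg (mul_nonneg hA (by linarith : (0:ℝ) ≤ (k₁:ℝ))) ha.le,
      mul_nonneg (mul_nonneg hB (by linarith : (0:ℝ) ≤ (k₃:ℝ))) hb.le]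
  calc (k₁ * k₃ : ℝ) * (a + b - c) ≤ -((k₁ * k₂ : ℝ) * a + (k₂ * k₃ : ℝ) * b + (k₁ * k₃ : ℝ) * c) := key
    _ ≤ |(k₁ * k₂ : ℝ) * a + (k₂ * k₃ : ℝ) * b + (k₁ * k₃ : ℝ) * c| := neg_le_abs _
end
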